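/- (Rank of a supermatroid satisfies unit increase) Let L be a finite lower semimodular lattice and I a supermatroid on L. Define r(X) = max{|I| : I ∈ I, I ≤ X}. Then r(⊥) = 0 and for all X' ⋖ X, r(X) − r(X') ∈ {0, 1}. -/
import Mathlib


/-- The height of an element: length of a maximal chain from the bottom. -/
noncomputable def ht {α : Type*} [Preorder α] (x : α) : ℕ := (Order.height x).toNat

/-- The rank function of a family `𝓘`: the maximum height of a member below `X`. -/
noncomputable def rank {α : Type*} [Lattice α] (𝓘 : Set α) (X : α) : ℕ :=
  sSup (ht '' {I | I ∈ 𝓘 ∧ I ≤ X})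

section aux

variable {α : Type*} [PartialOrder α] [Fintype α]

lemma height_ne_top' (x : α) : Order.height x ≠ ⊤ := by
  intro h
  rw [Order.height_eq_top_iff] at h
  obtain ⟨p, -, hp⟩ := h (Fintype.card α)
  have := p.length_lt_card
  omega

lemma coe_ht (x : α) : (ht x : ℕ∞) = Order.height x :=
  ENat.coe_toNat (height_ne_top' x)

lemma ht_mono {a b : α} (h : a ≤ b) : ht a ≤ ht b :=
  ENat.toNat_le_toNat (Order.height_mono h) (height_ne_top' b)

lemma ht_strict {a b : α} (h : a < b) : ht a < ht b := by
  have := Order.height_strictMono h (lt_top_iff_ne_top.mpr (height_ne_top' a))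
  rwa [← coe_ht a, ← coe_ht b, Nat.cast_lt] at this

/-- For any element of positive height, there is a cover below it of height one less. -/
lemma exists_cover_ht {b : α} {n : ℕ} (hb : ht b = n + 1) :
    ∃ c : α, c ⋖ b ∧ ht c = n := by
  have h : Order.height b = (n : ℕ∞) + 1 := by
    rw [← coe_ht b, hb]; norm_cast
  rw [Order.height_eq_coe_add_one_iff] at h
  obtain ⟨-, ⟨y, hy, hyn⟩, hall⟩ := h
  obtain ⟨c, hyc, hcb⟩ := exists_le_covBy_of_lt hy
  refine ⟨c, hcb, le_antisymm ?_ ?_⟩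
  · have := hall c hcb.lt
    have := ENat.toNat_le_toNat this (by simp)
    simpa [ht] using this
  · have hyht : ht y = n := by
      have := congrArg ENat.toNat hyn
      simpa [ht] using this
    exact hyht ▸ ht_mono hyc

end aux

section grade

variable {α : Type*} [Lattice α] [Fintype α]

/-- In a finite lower semimodular lattice, covers increase height by exactly one. -/
lemma ht_covBy (hLSM : ∀ X Y : α, X ⋖ X ⊔ Y → X ⊓ Y ⋖ Y) :
    ∀ (n : ℕ) (b a : α), ht b ≤ n → a ⋖ b → ht b = ht a + 1 := by
  intro n
  induction n with
  | zero =>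
    intro b a hb hab
    have := ht_strict hab.lt
    omega
  | succ n IH =>
    intro b a hb hab
    have hlt := ht_strict hab.lt
    obtain ⟨k, hk⟩ : ∃ k, ht b = k + 1 := ⟨ht b - 1, by omega⟩
    obtain ⟨c, hcb, hc⟩ := exists_cover_ht hk
    by_cases hac : a = c
    · subst hac; omega
    · -- a ≠ c, both covered by b
      have hnca : ¬ c ≤ a := by
        intro h
        have : c < a := lt_of_le_of_ne h (fun h' => hac h'.symm)
        exact hcb.2 this hab.lt
      have hnac : ¬ a ≤ c := by
        intro h
        have : a < c := lt_of_le_of_ne h hac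
        exact hab.2 this hcb.lt
      have hsup : a ⊔ c = b := by
        rcases lt_or_eq_of_le (sup_le hab.lt.le hcb.lt.le) with h | h
        · exact absurd h (hab.2 (lt_of_le_of_ne le_sup_left
            (fun h' => hnca (h' ▸ le_sup_right))))
        · exact h
      have hinf : a ⊓ c ⋖ c := hLSM a c (by rwa [hsup])
      have hcn : ht c ≤ n := by omega
      have h1 := IH c (a ⊓ c) hcn hinf
      have h2 : a ⊓ c < a := lt_of_le_of_ne inf_le_left
        (fun h' => hnac (h' ▸ inf_le_right))
      have := ht_strict h2
      omega

end grade

/-- The rank function of a supermatroid on a finite lower semimodular lattice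
satisfies `r ⊥ = 0` and the unit-increase property. -/
theorem supermatroid_rank_unit_increase {α : Type*} [Lattice α] [Fintype α]
    [BoundedOrder α]
    (hLSM : ∀ X Y : α, X ⋖ X ⊔ Y → X ⊓ Y ⋖ Y)
    (𝓘 : Set α) (hne : 𝓘.Nonempty) (hideal : IsLowerSet 𝓘)
    (hH2 : ∀ X I₁ I₂ : α, Maximal (fun J => J ∈ 𝓘 ∧ J ≤ X) I₁ →
        Maximal (fun J => J ∈ 𝓘 ∧ J ≤ X) I₂ → ht I₁ = ht I₂) :
    rank 𝓘 (⊥ : α) = 0 ∧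
    ∀ X' X : α, X' ⋖ X → rank 𝓘 X = rank 𝓘 X' ∨ rank 𝓘 X = rank 𝓘 X' + 1 := by
  obtain ⟨I₀, hI₀⟩ := hne
  have hbot : (⊥ : α) ∈ 𝓘 := hideal bot_le hI₀
  -- the defining set of rank is nonempty and bounded above
  have hSne : ∀ X : α, (ht '' {I | I ∈ 𝓘 ∧ I ≤ X}).Nonempty :=
    fun X => ⟨ht (⊥ : α), ⟨⊥, ⟨hbot, bot_le⟩, rfl⟩⟩
  have hSbdd : ∀ X : α, BddAbove (ht '' {I | I ∈ 𝓘 ∧ I ≤ X}) :=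
    fun X => Set.Finite.bddAbove (Set.toFinite _)
  -- rank is attained
  have hattain : ∀ X : α, ∃ I, I ∈ 𝓘 ∧ I ≤ X ∧ ht I = rank 𝓘 X := by
    intro X
    have := Nat.sSup_mem (hSne X) (hSbdd X)
    obtain ⟨I, ⟨hI1, hI2⟩, hI3⟩ := this
    exact ⟨I, hI1, hI2, hI3⟩
  have hle : ∀ (X I : α), I ∈ 𝓘 → I ≤ X → ht I ≤ rank 𝓘 X := by
    intro X I h1 h2
    exact le_csSup (hSbdd X) ⟨I, ⟨h1, h2⟩, rfl⟩
  constructor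
  · -- rank at ⊥ is 0
    obtain ⟨I, -, hI2, hI3⟩ := hattain (⊥ : α)
    have : I = ⊥ := le_bot_iff.mp hI2
    subst this
    rw [← hI3]
    simp [ht]
  · intro X' X hXX
    -- monotonicity
    have hmono : rank 𝓘 X' ≤ rank 𝓘 X := by
      apply csSup_le_csSup (hSbdd X) (hSne X')
      rintro n ⟨I, ⟨h1, h2⟩, rfl⟩
      exact ⟨I, ⟨h1, h2.trans hXX.lt.le⟩, rfl⟩
    obtain ⟨I, hI1, hI2, hI3⟩ := hattain X
    by_cases hIX' : I ≤ X'
    · left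
      exact le_antisymm (hI3 ▸ hle X' I hI1 hIX') hmono |>.symm ▸
        (le_antisymm hmono (hI3 ▸ hle X' I hI1 hIX')).symm
    · -- I ≰ X', so X' ⊔ I = X and lower semimodularity applies
      have hsup : X' ⊔ I = X := by
        rcases lt_or_eq_of_le (sup_le hXX.lt.le hI2) with h | h
        · exact absurd h (hXX.2 (lt_of_le_of_ne le_sup_left
            (fun h' => hIX' (h' ▸ le_sup_right))))
        · exact h
      have hcov : X' ⊓ I ⋖ I := hLSM X' I (by rwa [hsup])
      have hgrade := ht_covBy hLSM (ht I) I (X' ⊓ I) le_rfl hcov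
      have hmem : X' ⊓ I ∈ 𝓘 := hideal inf_le_right hI1
      have := hle X' (X' ⊓ I) hmem inf_le_left
      have hub : rank 𝓘 X ≤ rank 𝓘 X' + 1 := by omega
      omega
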